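/- arXiv:1508.00018 — 2 statements merged into one kernel-verified Lean document; each statement's English description precedes it below -/
import Mathlib

section
/- Discrete Hardy inequality: For every a > 0 and γ > 0 there exists a constant C > 0 such that for any sequence (b_n) of nonnegative reals, ∑_{n=0}^∞ 2^{-na} (∑_{k=0}^n b_k)^γ ≤ C ∑_{n=0}^∞ 2^{-na} b_n^γ. -/
/-!
The weight `2^(-na)` is geometric, `q^n` with `q < 1`. Pick `s > 1` with `q s^γ < 1`. Bounding
each `b k` by `s^(k-n)` times the largest of the numbers `s^(n-k) b k` gives, for every `γ > 0`
at once, `(∑_{k ≤ n} b k)^γ ≤ D ∑_{k ≤ n} (s^γ)^(n-k) (b k)^γ` with `D` independent of `n`.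
Multiplying by `q^n` and summing over `n`, the double sum is the Cauchy product of
`(q^k (b k)^γ)_k` with the convergent geometric series of ratio `q s^γ`.
-/

open ENNReal Finset

namespace ENNReal

theorem rpow_sum_le_rpow_sum_inv_mul_sum_rpow {ι : Type*} (S : Finset ι) (x c : ι → ℝ≥0∞)
    (hc₀ : ∀ k ∈ S, c k ≠ 0) (hc : ∀ k ∈ S, c k ≠ ∞) {γ : ℝ} (hγ : 0 < γ) :
    (∑ k ∈ S, x k) ^ γ ≤ (∑ k ∈ S, (c k)⁻¹) ^ γ * ∑ k ∈ S, (c k * x k) ^ γ := by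
  set M := ∑ k ∈ S, (c k * x k) ^ γ
  have hx : ∀ k ∈ S, x k ≤ (c k)⁻¹ * M ^ γ⁻¹ := fun k hk => by
    have hcx : c k * x k ≤ M ^ γ⁻¹ :=
      (le_rpow_inv_iff hγ).2 (single_le_sum (f := fun j => (c j * x j) ^ γ) (fun _ _ => zero_le) hk)
    calc x k = (c k)⁻¹ * (c k * x k) := (ENNReal.inv_mul_cancel_left (hc₀ k hk) (hc k hk)).symm
      _ ≤ (c k)⁻¹ * M ^ γ⁻¹ := by gcongr
  calc (∑ k ∈ S, x k) ^ γ ≤ ((∑ k ∈ S, (c k)⁻¹) * M ^ γ⁻¹) ^ γ := by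
        rw [sum_mul]; gcongr with k hk; exact hx k hk
    _ = (∑ k ∈ S, (c k)⁻¹) ^ γ * M := by
        rw [mul_rpow_of_nonneg _ _ hγ.le, rpow_inv_rpow hγ.ne']

theorem sum_range_succ_pow_sub_le (r : ℝ≥0∞) (n : ℕ) :
    ∑ k ∈ range (n + 1), r ^ (n - k) ≤ (1 - r)⁻¹ := by
  calc ∑ k ∈ range (n + 1), r ^ (n - k) = ∑ k ∈ range (n + 1), r ^ k := by
        simpa only [add_tsub_cancel_right] using sum_range_reflect (r ^ ·) (n + 1)
    _ ≤ ∑' k, r ^ k := ENNReal.sum_le_tsum _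
    _ = (1 - r)⁻¹ := tsum_geometric r

theorem rpow_sum_range_succ_le {s : ℝ≥0∞} (hs : 1 < s) (hs' : s ≠ ∞) {γ : ℝ} (hγ : 0 < γ)
    (n : ℕ) (x : ℕ → ℝ≥0∞) :
    (∑ k ∈ range (n + 1), x k) ^ γ ≤
      (1 - s⁻¹)⁻¹ ^ γ * ∑ k ∈ range (n + 1), (s ^ γ) ^ (n - k) * x k ^ γ := by
  have hs₀ : s ≠ 0 := (zero_lt_one.trans hs).ne'
  calc (∑ k ∈ range (n + 1), x k) ^ γ
      ≤ (∑ k ∈ range (n + 1), (s ^ (n - k))⁻¹) ^ γ *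
          ∑ k ∈ range (n + 1), (s ^ (n - k) * x k) ^ γ :=
        rpow_sum_le_rpow_sum_inv_mul_sum_rpow _ _ _ (fun _ _ => pow_ne_zero _ hs₀)
          (fun _ _ => pow_ne_top hs') hγ
    _ = (∑ k ∈ range (n + 1), s⁻¹ ^ (n - k)) ^ γ *
          ∑ k ∈ range (n + 1), (s ^ γ) ^ (n - k) * x k ^ γ := by
        simp_rw [ENNReal.inv_pow, mul_rpow_of_nonneg _ _ hγ.le, ← rpow_natCast_mul, mul_comm _ γ,
          rpow_mul_natCast]
    _ ≤ (1 - s⁻¹)⁻¹ ^ γ * ∑ k ∈ range (n + 1), (s ^ γ) ^ (n - k) * x k ^ γ := by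
        gcongr
        exact sum_range_succ_pow_sub_le _ n

theorem tsum_mul_tsum_eq_tsum_sum_range (f g : ℕ → ℝ≥0∞) :
    (∑' n, f n) * ∑' n, g n = ∑' n, ∑ k ∈ range (n + 1), f k * g (n - k) := by
  simp_rw [← ENNReal.tsum_mul_right, ← ENNReal.tsum_mul_left, ← ENNReal.tsum_prod,
    ← Nat.sum_antidiagonal_eq_sum_range_succ fun k l => f k * g l,
    ← HasAntidiagonal.sigmaAntidiagonalEquivProd.tsum_eq, ENNReal.tsum_sigma']
  exact tsum_congr fun n => tsum_subtype _ fun kl : ℕ × ℕ => f kl.1 * g kl.2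

theorem exists_one_lt_mul_rpow_lt_one {q : ℝ≥0∞} (hq : q < 1) {γ : ℝ} (hγ : 0 < γ) :
    ∃ s, 1 < s ∧ s ≠ ∞ ∧ q * s ^ γ < 1 := by
  obtain ⟨t, ht₁, htq⟩ := exists_between (ENNReal.one_lt_inv.2 hq)
  refine ⟨t ^ γ⁻¹, one_lt_rpow ht₁ (inv_pos.2 hγ),
    rpow_ne_top_of_nonneg (inv_nonneg.2 hγ.le) (ne_top_of_lt htq), ?_⟩
  rw [← rpow_mul, inv_mul_cancel₀ hγ.ne', rpow_one, mul_comm]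
  exact mul_lt_of_lt_div (by rwa [one_div])

theorem exists_tsum_pow_mul_rpow_sum_range_le {q : ℝ≥0∞} (hq : q < 1) {γ : ℝ} (hγ : 0 < γ) :
    ∃ C : ℝ≥0∞, 0 < C ∧ C ≠ ∞ ∧ ∀ b : ℕ → ℝ≥0∞,
      ∑' n, q ^ n * (∑ k ∈ range (n + 1), b k) ^ γ ≤ C * ∑' n, q ^ n * b n ^ γ := by
  obtain ⟨s, hs, hs', hqs⟩ := exists_one_lt_mul_rpow_lt_one hq hγ
  have hpos : ∀ r : ℝ≥0∞, 0 < (1 - r)⁻¹ := fun r => ENNReal.inv_pos.2 (sub_ne_top one_ne_top)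
  have hfin : ∀ {r : ℝ≥0∞}, r < 1 → (1 - r)⁻¹ ≠ ∞ := fun hr => inv_ne_top.2 (tsub_pos_of_lt hr).ne'
  have hs_inv : s⁻¹ < 1 := ENNReal.inv_lt_one.2 hs
  set D := (1 - s⁻¹)⁻¹ ^ γ
  refine ⟨D * (1 - q * s ^ γ)⁻¹, ENNReal.mul_pos (rpow_pos (hpos _) (hfin hs_inv)).ne' (hpos _).ne',
    mul_ne_top (rpow_ne_top_of_nonneg hγ.le (hfin hs_inv)) (hfin hqs), fun b => ?_⟩
  calc ∑' n, q ^ n * (∑ k ∈ range (n + 1), b k) ^ γ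
      ≤ ∑' n, q ^ n * (D * ∑ k ∈ range (n + 1), (s ^ γ) ^ (n - k) * b k ^ γ) := by
        gcongr with n; exact rpow_sum_range_succ_le hs hs' hγ n b
    _ = D * ∑' n, ∑ k ∈ range (n + 1), q ^ k * b k ^ γ * (q * s ^ γ) ^ (n - k) := by
        rw [← ENNReal.tsum_mul_left]
        refine tsum_congr fun n => ?_
        rw [mul_left_comm, mul_sum]
        congr 1
        refine sum_congr rfl fun k hk => ?_
        obtain ⟨j, rfl⟩ := Nat.exists_eq_add_of_le (Nat.lt_succ_iff.1 (mem_range.1 hk))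
        rw [Nat.add_sub_cancel_left, mul_pow, pow_add]
        ring
    _ = D * (1 - q * s ^ γ)⁻¹ * ∑' n, q ^ n * b n ^ γ := by
        rw [← tsum_mul_tsum_eq_tsum_sum_range, tsum_geometric, mul_comm _ (1 - _)⁻¹, mul_assoc]

end ENNReal

/-- Discrete Hardy inequality in the extended nonnegative reals. -/
theorem discrete_hardy (a γ : ℝ) (ha : 0 < a) (hγ : 0 < γ) :
    ∃ C : ℝ≥0∞, 0 < C ∧ C ≠ ∞ ∧ ∀ b : ℕ → ℝ≥0∞,
      ∑' n : ℕ, ENNReal.ofReal ((2:ℝ) ^ (-(n:ℝ) * a)) *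
          (∑ k ∈ Finset.range (n + 1), b k) ^ γ ≤
        C * ∑' n : ℕ, ENNReal.ofReal ((2:ℝ) ^ (-(n:ℝ) * a)) * (b n) ^ γ := by
  have hweight (n : ℕ) :
      ENNReal.ofReal ((2:ℝ) ^ (-(n:ℝ) * a)) = ENNReal.ofReal (2 ^ (-a)) ^ n := by
    rw [← ofReal_pow (by positivity), ← Real.rpow_natCast, ← Real.rpow_mul zero_le_two,
      neg_mul_comm, mul_comm]
  have hq : ENNReal.ofReal (2 ^ (-a)) < 1 :=
    ofReal_lt_one.2 (Real.rpow_lt_one_of_one_lt_of_neg one_lt_two (neg_neg_of_pos ha))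
  simpa only [hweight] using exists_tsum_pow_mul_rpow_sum_range_le hq hγ
end

section
/- Bounded overlap of comparable disjoint balls: Let (X,d) be a metric space with the weak homogeneity property. Fix 1 ≤ a < b and κ > 1. Then there exists a constant C such that for any family {B_i = B(x_i, r_i)} of pairwise disjoint balls and any r > 0, the sum over those i with a·r ≤ r_i ≤ b·r of the indicator functions of κB_i is bounded pointwise by C. -/
open Metric Set ENNReal

/-- A metric space has the weak homogeneity property if there is `n` such that any
`r/2`-separated set has at most `n` points in any ball of radius `r`. -/
def WeakHomogeneity (X : Type*) [MetricSpace X] : Prop :=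
  ∃ n : ℕ, ∀ r : ℝ, 0 < r → ∀ E : Set X,
    (E.Pairwise fun x y => r / 2 ≤ dist x y) →
    ∀ x₀ : X, ∀ S : Finset X, ↑S ⊆ E ∩ ball x₀ r → S.card ≤ n

/-! Let `S` be `s`-separated in a ball of radius `2 ^ (k + 1) * s`. A maximal
`2 ^ k * s`-separated subset of `S` has at most `n` points by weak homogeneity, and the balls of
radius `2 ^ k * s` around its points cover `S`; by induction on `k`, `S` has at most
`n ^ (k + 2)` points. In the theorem, the centres of the balls with `a r ≤ rᵢ ≤ b r` whose
dilations contain `z` are `a r`-separated (the balls are disjoint) and lie in `B(z, κ b r)`, so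
there are at most `n ^ (K + 1)` of them once `κ b ≤ 2 ^ K a`. -/

def WeakHomogeneityWith (X : Type*) [PseudoMetricSpace X] (n : ℕ) : Prop :=
  ∀ ⦃r : ℝ⦄, 0 < r → ∀ ⦃S : Finset X⦄, (S : Set X).Pairwise (fun x y => r / 2 ≤ dist x y) →
    ∀ ⦃x₀ : X⦄, ↑S ⊆ ball x₀ r → S.card ≤ n

theorem WeakHomogeneity.exists_weakHomogeneityWith {X : Type*} [MetricSpace X]
    (hX : WeakHomogeneity X) : ∃ n, WeakHomogeneityWith X n := by
  obtain ⟨n, hn⟩ := hX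
  exact ⟨n, fun r hr S hS x₀ hSx => hn r hr S hS x₀ S fun _ hx => ⟨hx, hSx hx⟩⟩

section

variable {X : Type*} [PseudoMetricSpace X]

theorem Finset.exists_subset_pairwise_le_dist_forall_exists_dist_lt (S : Finset X) {D : ℝ}
    (hD : 0 < D) : ∃ T ⊆ S, (T : Set X).Pairwise (fun x y => D ≤ dist x y) ∧
      ∀ x ∈ S, ∃ t ∈ T, dist x t < D := by
  classical
  obtain ⟨T, hT, hmax⟩ := (S.powerset.filter fun T : Finset X =>
    (T : Set X).Pairwise (fun x y => D ≤ dist x y)).exists_max_image Finset.card ⟨∅, by simp⟩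
  rw [Finset.mem_filter, Finset.mem_powerset] at hT
  refine ⟨T, hT.1, hT.2, fun x hx => ?_⟩
  by_contra! hfar
  have hxT : x ∉ T := fun h => (hfar x h).not_gt (by simpa using hD)
  have hsep : ((insert x T : Finset X) : Set X).Pairwise (fun x y => D ≤ dist x y) := by
    rw [Finset.coe_insert]
    exact hT.2.insert fun t ht _ => ⟨hfar t ht, dist_comm t x ▸ hfar t ht⟩
  have := hmax (insert x T)
    (Finset.mem_filter.2 ⟨Finset.mem_powerset.2 (Finset.insert_subset hx hT.1), hsep⟩)
  rw [Finset.card_insert_of_notMem hxT] at this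
  omega

theorem Metric.le_dist_of_disjoint_ball {x y : X} {r s : ℝ}
    (h : Disjoint (ball x r) (ball y s)) (hs : 0 < s) : r ≤ dist x y :=
  not_lt.1 fun hlt => h.ne_of_mem (mem_ball'.2 hlt) (mem_ball_self hs) rfl

theorem WeakHomogeneityWith.card_le_pow {n : ℕ} (hX : WeakHomogeneityWith X n) (k : ℕ) {s : ℝ}
    (hs : 0 < s) {S : Finset X} (hS : (S : Set X).Pairwise (fun x y => s ≤ dist x y)) {x₀ : X}
    (hSx : ↑S ⊆ ball x₀ (2 ^ k * s)) : S.card ≤ n ^ (k + 1) := by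
  classical
  induction k generalizing S x₀ with
  | zero =>
    rw [zero_add, pow_one]
    exact hX hs (hS.mono' fun x y h => le_trans (by linarith) h) (by simpa using hSx)
  | succ k ih =>
    obtain ⟨T, hTS, hTsep, hTcov⟩ :=
      S.exists_subset_pairwise_le_dist_forall_exists_dist_lt (D := 2 ^ k * s) (by positivity)
    choose! f hfT hf using hTcov
    have hT : T.card ≤ n := by
      have hhalf : 2 ^ (k + 1) * s / 2 = 2 ^ k * s := by ring
      exact hX (by positivity) (hhalf ▸ hTsep) ((Finset.coe_subset.2 hTS).trans hSx)
    have hfiber : ∀ t ∈ T, (S.filter fun x => f x = t).card ≤ n ^ (k + 1) := fun t _ =>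
      ih (hS.mono (Finset.coe_subset.2 (Finset.filter_subset _ _))) fun x hx => by
        rw [Finset.coe_filter] at hx
        exact mem_ball.2 (hx.2 ▸ hf x hx.1)
    calc S.card ≤ n ^ (k + 1) * T.card := Finset.card_le_mul_card_image_of_maps_to hfT _ hfiber
      _ ≤ n ^ (k + 1) * n := Nat.mul_le_mul_left _ hT
      _ = n ^ (k + 2) := (pow_succ n (k + 1)).symm

theorem WeakHomogeneityWith.encard_le_pow {n : ℕ} (hX : WeakHomogeneityWith X n) (k : ℕ) {s : ℝ}
    (hs : 0 < s) {E : Set X} (hE : E.Pairwise (fun x y => s ≤ dist x y)) {x₀ : X}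
    (hEx : E ⊆ ball x₀ (2 ^ k * s)) : E.encard ≤ n ^ (k + 1) := by
  by_contra! hlt
  obtain ⟨F, hFE, hF⟩ := exists_subset_encard_eq (Order.add_one_le_of_lt hlt)
  have hFfin : F.Finite := finite_of_encard_eq_coe hF
  have hcard := hX.card_le_pow k hs (S := hFfin.toFinset) (by simpa using hE.mono hFE)
    (by simpa using hFE.trans hEx)
  rw [hFfin.encard_eq_coe_toFinset_card] at hF
  norm_cast at hF
  omega

end

theorem bounded_overlap_general {X : Type*} [MetricSpace X] (hX : WeakHomogeneity X)
    (a b κ : ℝ) (ha : 1 ≤ a) :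
    ∃ C : ℝ≥0∞, C ≠ ∞ ∧ ∀ (ι : Type) (c : ι → X) (rad : ι → ℝ),
      (∀ i, 0 < rad i) →
      (Pairwise fun i j => Disjoint (ball (c i) (rad i)) (ball (c j) (rad j))) →
      ∀ r : ℝ, 0 < r → ∀ z : X,
        (∑' i : ι, if a * r ≤ rad i ∧ rad i ≤ b * r then
            (ball (c i) (κ * rad i)).indicator (fun _ => (1 : ℝ≥0∞)) z else 0) ≤ C := by
  obtain ⟨n, hn⟩ := hX.exists_weakHomogeneityWith
  have ha₀ : 0 < a := one_pos.trans_le ha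
  obtain ⟨K, hK⟩ : ∃ K : ℕ, κ * b ≤ 2 ^ K * a := by
    obtain ⟨K, hK⟩ := pow_unbounded_of_one_lt (κ * b / a) one_lt_two
    exact ⟨K, ((div_lt_iff₀ ha₀).1 hK).le⟩
  refine ⟨(n ^ (K + 1) : ℕ), natCast_ne_top _, fun ι c rad hrad hdisj r hr z => ?_⟩
  set A : Set ι := {i | (a * r ≤ rad i ∧ rad i ≤ b * r) ∧ z ∈ ball (c i) (κ * rad i)}
  have hsum : (∑' i : ι, if a * r ≤ rad i ∧ rad i ≤ b * r then
      (ball (c i) (κ * rad i)).indicator (fun _ => (1 : ℝ≥0∞)) z else 0) = A.encard := by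
    classical
    rw [← tsum_set_one, tsum_subtype A fun _ => (1 : ℝ≥0∞)]
    congr 1 with i
    simp only [A, indicator_apply, mem_ofPred_eq, ite_and]
  have hinj : Function.Injective c := fun i j hij => by
    by_contra hne
    have := le_dist_of_disjoint_ball (hdisj hne) (hrad j)
    rw [hij, dist_self] at this
    exact (hrad i).not_ge this
  have hsep : (c '' A).Pairwise fun x y => a * r ≤ dist x y := by
    rintro _ ⟨i, hi, rfl⟩ _ ⟨j, -, rfl⟩ hne
    exact hi.1.1.trans (le_dist_of_disjoint_ball (hdisj (ne_of_apply_ne c hne)) (hrad j))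
  have hball : c '' A ⊆ ball z (2 ^ K * (a * r)) := by
    rintro _ ⟨i, ⟨⟨-, hib⟩, hiz⟩, rfl⟩
    rw [mem_ball'] at hiz
    have hκ : 0 < κ := pos_of_mul_pos_left (dist_nonneg.trans_lt hiz) (hrad i).le
    rw [mem_ball]
    calc dist (c i) z < κ * rad i := hiz
      _ ≤ κ * b * r := by rw [mul_assoc]; exact mul_le_mul_of_nonneg_left hib hκ.le
      _ ≤ 2 ^ K * (a * r) := by rw [← mul_assoc]; exact mul_le_mul_of_nonneg_right hK hr.le
  rw [hsum, ← hinj.encard_image]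
  exact_mod_cast hn.encard_le_pow K (mul_pos ha₀ hr) hsep hball

/-- Bounded overlap of dilations of pairwise disjoint balls with comparable radii. -/
theorem bounded_overlap {X : Type*} [MetricSpace X] (hX : WeakHomogeneity X)
    (a b κ : ℝ) (ha : 1 ≤ a) (hab : a < b) (hκ : 1 < κ) :
    ∃ C : ℝ≥0∞, C ≠ ∞ ∧ ∀ (ι : Type) (c : ι → X) (rad : ι → ℝ),
      (∀ i, 0 < rad i) →
      (Pairwise fun i j => Disjoint (ball (c i) (rad i)) (ball (c j) (rad j))) →
      ∀ r : ℝ, 0 < r → ∀ z : X,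
        (∑' i : ι, if a * r ≤ rad i ∧ rad i ≤ b * r then
            (ball (c i) (κ * rad i)).indicator (fun _ => (1 : ℝ≥0∞)) z else 0) ≤ C :=
  bounded_overlap_general hX a b κ ha
end
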